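/- arXiv:2506.18582 — 5 statements merged into one kernel-verified Lean document; each statement's English description precedes it below -/
import Mathlib

section
/- Inductive step of Theorem 1: let k, t : ℕ with t ≥ k, and suppose that for every j ≤ k and every iteration index s ≥ j we have g s j = h j. Then g (t+1) (k+1) = h (k+1), and moreover g (t+1) j = h j for every j ≤ k+1. -/
/-! Both recurrences feed `f` the prompt `E` followed by the previous states, so `g (t+1) (k+1)`
and `h (k+1)` are `f` applied to `E ++ [g t 0, …, g t k]` and `E ++ [h 0, …, h k]`. The hypothesis
`t ≥ k` makes every `g t j` with `j ≤ k` equal to `h j`, so the two inputs coincide. -/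

theorem List.map_range_congr {α : Type*} {a b : ℕ → α} {n : ℕ} (hab : ∀ j < n, a j = b j) :
    (List.range n).map a = (List.range n).map b :=
  List.map_congr_left fun j hj => hab j (List.mem_range.mp hj)

theorem pccot_inductive_step_general {V : Type*} (f : List V → V) (E : List V)
    (h : ℕ → V) (g : ℕ → ℕ → V)
    (hhs : ∀ i : ℕ, h (i + 1) = f (E ++ (List.range (i + 1)).map h))
    (hgs : ∀ t i : ℕ, g (t + 1) i = f (E ++ (List.range i).map (g t)))
    (k t : ℕ) (htk : t ≥ k)
    (ih : ∀ j : ℕ, j ≤ k → ∀ s : ℕ, s ≥ j → g s j = h j) :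
    g (t + 1) (k + 1) = h (k + 1) ∧ ∀ j : ℕ, j ≤ k + 1 → g (t + 1) j = h j := by
  have hnext : g (t + 1) (k + 1) = h (k + 1) := by
    rw [hgs, hhs, List.map_range_congr fun j hj => ih j (by omega) t (by omega)]
  refine ⟨hnext, fun j hj => ?_⟩
  rcases Nat.lt_or_eq_of_le hj with hlt | rfl
  · exact ih j (by omega) (t + 1) (by omega)
  · exact hnext

/-- Inductive step of Theorem 1 (PCCoT ≡ continuous CoT):
if `t ≥ k` and for every `j ≤ k` and every iteration index `s ≥ j` we have
`g s j = h j`, then `g (t+1) (k+1) = h (k+1)`, and moreover `g (t+1) j = h j`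
for every `j ≤ k + 1`. Here `f` models a causal transformer, `E` the query
(and begin-of-thought) embeddings, `L` the dummy latent embedding, `h` the
continuous-CoT latent states and `g` the PCCoT states. -/
theorem pccot_inductive_step {V : Type*} (f : List V → V) (E : List V) (L : V)
    (h : ℕ → V) (g : ℕ → ℕ → V)
    (hh0 : h 0 = f E)
    (hhs : ∀ i : ℕ, h (i + 1) = f (E ++ (List.range (i + 1)).map h))
    (hg0 : ∀ i : ℕ, g 0 i = f (E ++ List.replicate i L))
    (hgs : ∀ t i : ℕ, g (t + 1) i = f (E ++ (List.range i).map (g t)))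
    (k t : ℕ) (htk : t ≥ k)
    (ih : ∀ j : ℕ, j ≤ k → ∀ s : ℕ, s ≥ j → g s j = h j) :
    g (t + 1) (k + 1) = h (k + 1) ∧ ∀ j : ℕ, j ≤ k + 1 → g (t + 1) j = h j :=
  pccot_inductive_step_general f E h g hhs hgs k t htk ih
end

section
/- Jacobi-iteration invariant: for all i, t : ℕ with t ≥ i, the PCCoT state at latent position i after t iterations equals the continuous-CoT state at that position, i.e. g t i = h i. (Paper's statement: h^{(t)}_{n+i} = h_{n+i} for all t ≥ i and i = 1, 2, …, c+1.) -/
/-!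
Position `i` of the causal recursion only reads positions `< i`. Hence if one parallel
(Jacobi) sweep starts from iterates that are already exact at positions `< t`, it is
exact at positions `≤ t`: each correct position needs one more sweep than its predecessor.
-/

theorem jacobi_iterate_eq_of_le {α : Type*} (F : List α → α) (h : ℕ → α) (g : ℕ → ℕ → α)
    (hh : ∀ i, h i = F ((List.range i).map h))
    (hg : ∀ t i, g (t + 1) i = F ((List.range i).map (g t)))
    (hg00 : g 0 0 = h 0) :
    ∀ {t i : ℕ}, i ≤ t → g t i = h i := by
  intro t
  induction t with
  | zero =>
    intro i hi
    obtain rfl : i = 0 := Nat.le_zero.mp hi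
    exact hg00
  | succ t ih =>
    intro i hi
    have prefix_eq : (List.range i).map (g t) = (List.range i).map h :=
      List.map_congr_left fun j hj => ih (by rw [List.mem_range] at hj; omega)
    rw [hg, hh i, prefix_eq]

/-- Jacobi-iteration invariant: for all `i t : ℕ` with `t ≥ i`, the PCCoT
state at latent position `i` after `t` iterations equals the continuous-CoT
state at that position, i.e. `g t i = h i`. Here `f` models a causal
transformer, `E` the query (and begin-of-thought) embeddings, `L` the dummy
latent embedding, `h` the continuous-CoT latent states and `g` the PCCoT
states (iteration index first, latent position second). -/
theorem pccot_invariant {V : Type*} (f : List V → V) (E : List V) (L : V)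
    (h : ℕ → V) (g : ℕ → ℕ → V)
    (hh0 : h 0 = f E)
    (hhs : ∀ i : ℕ, h (i + 1) = f (E ++ (List.range (i + 1)).map h))
    (hg0 : ∀ i : ℕ, g 0 i = f (E ++ List.replicate i L))
    (hgs : ∀ t i : ℕ, g (t + 1) i = f (E ++ (List.range i).map (g t))) :
    ∀ i t : ℕ, t ≥ i → g t i = h i := by
  have hh : ∀ i, h i = f (E ++ (List.range i).map h)
    | 0 => by simp [hh0]
    | i + 1 => hhs i
  have hg00 : g 0 0 = h 0 := by simp [hg0, hh0]
  intro i t hit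
  exact jacobi_iterate_eq_of_le (fun l => f (E ++ l)) h g hh hgs hg00 hit
end

section
/- Theorem 1 (equivalence of PCCoT and continuous CoT): let c : ℕ be the number of latent thought tokens and T : ℕ the number of extra Jacobi iterations. If T ≥ c, then for every latent position i ≤ c the PCCoT state after T extra iterations equals the continuous-CoT state at that position: g T i = h i. Hence the computation graph of PCCoT with c latent thought tokens and T ≥ c extra iterations is equivalent to that of continuous CoT with c latent thought tokens. -/
/-! Position `i` of a Jacobi iteration reads only positions `< i` of the previous iterate, and the
continuous-CoT states are a fixed point of that map. Hence each iteration makes one more position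
exact: after `t` iterations the states at all positions `i ≤ t` coincide with the continuous-CoT ones. -/

section

variable {V : Type*} (f : List V → V) (E : List V)

theorem continuous_cot_eq_apply_prefix {h : ℕ → V} (hh0 : h 0 = f E)
    (hhs : ∀ i : ℕ, h (i + 1) = f (E ++ (List.range (i + 1)).map h)) (i : ℕ) :
    h i = f (E ++ (List.range i).map h) := by
  cases i with
  | zero => simpa using hh0
  | succ i => exact hhs i

theorem jacobi_iterate_eq_fixedPoint_of_le {h : ℕ → V}
    (hfix : ∀ i : ℕ, h i = f (E ++ (List.range i).map h)) {g : ℕ → ℕ → V} (hg00 : g 0 0 = h 0)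
    (hgs : ∀ t i : ℕ, g (t + 1) i = f (E ++ (List.range i).map (g t))) :
    ∀ t i : ℕ, i ≤ t → g t i = h i := by
  intro t
  induction t with
  | zero =>
    intro i hi
    rwa [Nat.le_zero.mp hi]
  | succ t ih =>
    intro i hi
    have hprefix : (List.range i).map (g t) = (List.range i).map h :=
      List.map_congr_left fun j hj => ih j (by have := List.mem_range.mp hj; omega)
    rw [hgs, hfix i, hprefix]

end

/-- Theorem 1 (equivalence of PCCoT and continuous CoT): if the number of
extra Jacobi iterations `T` satisfies `T ≥ c` where `c` is the number of
latent thought tokens, then for every latent position `i ≤ c` the PCCoT state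
after `T` extra iterations equals the continuous-CoT state at that position:
`g T i = h i`. Here `f` models a causal transformer, `E` the query (and
begin-of-thought) embeddings, `L` the dummy latent embedding, `h` the
continuous-CoT latent states and `g` the PCCoT states. -/
theorem pccot_equiv_continuous_cot {V : Type*} (f : List V → V) (E : List V) (L : V)
    (h : ℕ → V) (g : ℕ → ℕ → V)
    (hh0 : h 0 = f E)
    (hhs : ∀ i : ℕ, h (i + 1) = f (E ++ (List.range (i + 1)).map h))
    (hg0 : ∀ i : ℕ, g 0 i = f (E ++ List.replicate i L))
    (hgs : ∀ t i : ℕ, g (t + 1) i = f (E ++ (List.range i).map (g t)))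
    (c T : ℕ) (hTc : T ≥ c) :
    ∀ i : ℕ, i ≤ c → g T i = h i := by
  have hg00 : g 0 0 = h 0 := by simpa [hh0] using hg0 0
  intro i hi
  exact jacobi_iterate_eq_fixedPoint_of_le f E (continuous_cot_eq_apply_prefix f E hh0 hhs) hg00
    hgs T i (hi.trans hTc)
end

section
/- Per-token fixed point: for all i, t : ℕ with t ≥ i, one Jacobi iteration does not change the state at latent position i, i.e. g (t+1) i = g t i. In other words, the i-th latent thought token reaches a fixed point after i extra iterations. -/
/-! Position `i` of an iterate only reads positions `j < i` of the previous iterate, so by strong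
induction on `i` position `i` is frozen once positions `j < i` are, i.e. from iteration `i` on.
The induction starts because position `0` of the first pass, like every later one, is `f E`. -/

theorem jacobi_succ_eq_of_le {V : Type*} (F : List V → V) (g : ℕ → ℕ → V)
    (hgs : ∀ t i : ℕ, g (t + 1) i = F ((List.range i).map (g t)))
    (h₀ : g 1 0 = g 0 0) :
    ∀ i t : ℕ, i ≤ t → g (t + 1) i = g t i := by
  intro i
  induction i using Nat.strong_induction_on with
  | _ i ih =>
    intro t hit
    rcases t with _ | t
    · obtain rfl : i = 0 := by omega
      exact h₀
    rw [hgs (t + 1), hgs t]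
    congr 1
    refine List.map_congr_left fun j hj => ?_
    exact ih j (List.mem_range.mp hj) t (by grind)

theorem pccot_per_token_fixed_point_general {V : Type*} (f : List V → V) (E : List V) (L : V)
    (g : ℕ → ℕ → V)
    (hg0 : ∀ i : ℕ, g 0 i = f (E ++ List.replicate i L))
    (hgs : ∀ t i : ℕ, g (t + 1) i = f (E ++ (List.range i).map (g t))) :
    ∀ i t : ℕ, t ≥ i → g (t + 1) i = g t i :=
  jacobi_succ_eq_of_le (fun l => f (E ++ l)) g hgs (by simp [hgs, hg0])

/-- Per-token fixed point: for all `i t : ℕ` with `t ≥ i`, one Jacobi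
iteration does not change the PCCoT state at latent position `i`, i.e.
`g (t+1) i = g t i`; the `i`-th latent thought token reaches a fixed point
after `i` extra iterations. Here `f` models a causal transformer, `E` the
query (and begin-of-thought) embeddings, `L` the dummy latent embedding,
`h` the continuous-CoT latent states and `g` the PCCoT states. -/
theorem pccot_per_token_fixed_point {V : Type*} (f : List V → V) (E : List V) (L : V)
    (h : ℕ → V) (g : ℕ → ℕ → V)
    (hh0 : h 0 = f E)
    (hhs : ∀ i : ℕ, h (i + 1) = f (E ++ (List.range (i + 1)).map h))
    (hg0 : ∀ i : ℕ, g 0 i = f (E ++ List.replicate i L))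
    (hgs : ∀ t i : ℕ, g (t + 1) i = f (E ++ (List.range i).map (g t))) :
    ∀ i t : ℕ, t ≥ i → g (t + 1) i = g t i :=
  pccot_per_token_fixed_point_general f E L g hg0 hgs
end

section
/- Global fixed point after c iterations: let c : ℕ be the number of latent thought tokens. For every t ≥ c and every latent position i ≤ c, one further Jacobi iteration changes nothing: g (t+1) i = g t i. That is, the entire vector of PCCoT latent states on positions 0, …, c is a fixed point of the Jacobi update from iteration c onward. -/
/-! Position `i` of a causal Jacobi update reads only positions `< i` of the previous iterate,
so by induction on `t` the positions `0, …, t` no longer change after iteration `t`. -/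

theorem causal_jacobi_succ_eq_of_le {V : Type*} (F : List V → V) (g : ℕ → ℕ → V)
    (hg0 : g 0 0 = F [])
    (hgs : ∀ t i : ℕ, g (t + 1) i = F ((List.range i).map (g t))) :
    ∀ t i : ℕ, i ≤ t → g (t + 1) i = g t i := by
  intro t
  induction t with
  | zero =>
    intro i hi
    obtain rfl : i = 0 := Nat.le_zero.mp hi
    simp [hgs, hg0]
  | succ s ih =>
    intro i hi
    have hprefix : (List.range i).map (g (s + 1)) = (List.range i).map (g s) :=
      List.map_congr_left fun j hj => ih j (by rw [List.mem_range] at hj; omega)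
    rw [hgs, hgs s, hprefix]

theorem pccot_global_fixed_point_general {V : Type*} (f : List V → V) (E : List V) (L : V)
    (g : ℕ → ℕ → V)
    (hg0 : ∀ i : ℕ, g 0 i = f (E ++ List.replicate i L))
    (hgs : ∀ t i : ℕ, g (t + 1) i = f (E ++ (List.range i).map (g t)))
    (c : ℕ) :
    ∀ t : ℕ, t ≥ c → ∀ i : ℕ, i ≤ c → g (t + 1) i = g t i :=
  fun t ht i hi =>
    causal_jacobi_succ_eq_of_le (fun l => f (E ++ l)) g (by simpa using hg0 0) hgs t i
      (hi.trans ht)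

/-- Global fixed point after `c` iterations: for the number of latent thought
tokens `c`, for every `t ≥ c` and every latent position `i ≤ c`, one further
Jacobi iteration changes nothing: `g (t+1) i = g t i`. That is, the vector of
PCCoT latent states on positions `0, …, c` is a fixed point of the Jacobi
update from iteration `c` onward. Here `f` models a causal transformer, `E`
the query (and begin-of-thought) embeddings, `L` the dummy latent embedding,
`h` the continuous-CoT latent states and `g` the PCCoT states. -/
theorem pccot_global_fixed_point {V : Type*} (f : List V → V) (E : List V) (L : V)
    (h : ℕ → V) (g : ℕ → ℕ → V)
    (hh0 : h 0 = f E)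
    (hhs : ∀ i : ℕ, h (i + 1) = f (E ++ (List.range (i + 1)).map h))
    (hg0 : ∀ i : ℕ, g 0 i = f (E ++ List.replicate i L))
    (hgs : ∀ t i : ℕ, g (t + 1) i = f (E ++ (List.range i).map (g t)))
    (c : ℕ) :
    ∀ t : ℕ, t ≥ c → ∀ i : ℕ, i ≤ c → g (t + 1) i = g t i :=
  pccot_global_fixed_point_general f E L g hg0 hgs c
end
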